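/- Fix n ≥ 1, injective ρ-functions ρ^{(k)} for 1 ≤ k ≤ n, and the derived functions f_i (i ≤ n) on increasing (i+1)-tuples from ω_n as defined from the ρ^{(k)}. Then for every infinite A ⊆ ω_n there is an infinite B ⊆ A such that for every i ≤ n the function f_i is shift-increasing on B: f_i(α_0, α_1, …, α_i) < f_i(α_1, …, α_i, β) whenever α_0 < α_1 < … < α_i < β all lie in B. -/

import Mathlib

/-!
Induction on `i`. If `f_i` is shift-increasing on an infinite `B`, then property (c) of
`ρ^{(n-i)}` gives `f_{i+1}(α_0,…,α_{i+1}) ≠ f_{i+1}(α_1,…,α_{i+2})` for increasing tuples from `B`.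
Colour increasing `(i+3)`-tuples by which of the two is smaller; by Ramsey's theorem some
infinite `B' ⊆ B` is homogeneous, and the colour `>` is impossible on an infinite set, since
sliding along an increasing sequence of `B'` would produce a strictly decreasing sequence of
ordinals.
-/

/-- `ω_k` as an ordinal (`ω_0 = ω`). -/
noncomputable def omegaOrd (k : ℕ) : Ordinal := (Cardinal.aleph k).ord

/-- A system of injective ρ-functions: for each `1 ≤ k ≤ n`, `ρ k` is symmetric on
distinct ordinals below `ω_k`, takes values below `ω_{k-1}`, and satisfies (a)
subadditivity, (b) injectivity in the first coordinate, and (c) `ρ(α,β) ≠ ρ(β,γ)`. -/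
def IsRhoSystem (n : ℕ) (ρ : ℕ → Ordinal → Ordinal → Ordinal) : Prop :=
  ∀ k : ℕ, 1 ≤ k → k ≤ n →
    (∀ α β, α < omegaOrd k → β < omegaOrd k → α ≠ β → ρ k α β = ρ k β α) ∧
    (∀ α β, α < omegaOrd k → β < omegaOrd k → α ≠ β → ρ k α β < omegaOrd (k - 1)) ∧
    (∀ α β γ, α < β → β < γ → γ < omegaOrd k →
      ρ k α β ≤ max (ρ k α γ) (ρ k β γ) ∧ ρ k α γ ≤ max (ρ k α β) (ρ k β γ)) ∧
    (∀ α α' β, α < β → α' < β → β < omegaOrd k → α ≠ α' → ρ k α β ≠ ρ k α' β) ∧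
    (∀ α β γ, α < β → β < γ → γ < omegaOrd k → ρ k α β ≠ ρ k β γ)

/-- The functions `f_i` derived from the ρ-functions: `f_0(α) = α` and
`f_{i+1}(α_0,…,α_{i+1}) = ρ^{(n-i)}(f_i(α_0,…,α_i), f_i(α_1,…,α_{i+1}))`
(with value `0` if the two arguments coincide).  A tuple `(α_0,…,α_i)` is
represented by a function `v : ℕ → Ordinal` via its first `i + 1` values. -/
noncomputable def fseq (n : ℕ) (ρ : ℕ → Ordinal → Ordinal → Ordinal) :
    ℕ → (ℕ → Ordinal) → Ordinal
  | 0, v => v 0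
  | (i + 1), v =>
      if fseq n ρ i v = fseq n ρ i (fun j => v (j + 1)) then 0
      else ρ (n - i) (fseq n ρ i v) (fseq n ρ i (fun j => v (j + 1)))

open Set

section Ramsey

variable {α : Type*} [LinearOrder α] [WellFoundedLT α]

theorem Set.Infinite.exists_strictMono_mem {S : Set α} (hS : S.Infinite) :
    ∃ g : ℕ → α, StrictMono g ∧ ∀ m, g m ∈ S := by
  have : Infinite S := hS.to_subtype
  obtain ⟨g, hg | hg⟩ := Infinite.exists_strictMono_or_strictAnti S
  · exact ⟨Subtype.val ∘ g, (Subtype.strictMono_coe _).comp hg, fun m => (g m).2⟩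
  · exact (not_strictAnti_of_wellFoundedLT g hg).elim

theorem Set.Infinite.exists_mem_infinite_inter_Ioi {T : Set α} (hT : T.Infinite) :
    ∃ a ∈ T, (T ∩ Ioi a).Infinite := by
  obtain ⟨a, ha, hmin⟩ := wellFounded_lt.has_min T hT.nonempty
  refine ⟨a, ha, (hT.sdiff (finite_singleton a)).mono fun x hx => ⟨hx.1, ?_⟩⟩
  exact lt_of_le_of_ne (not_lt.1 (hmin x hx.1)) (Ne.symm hx.2)

variable {C : Type*}

def IsHomogeneous {k : ℕ} (c : (Fin k → α) → C) (B : Set α) : Prop :=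
  ∃ d, ∀ w : Fin k → α, StrictMono w → (∀ l, w l ∈ B) → c w = d

theorem exists_strictMono_forall_cons_eq {k : ℕ}
    (ih : ∀ (c : (Fin k → α) → C) {S : Set α}, S.Infinite →
      ∃ B ⊆ S, B.Infinite ∧ IsHomogeneous c B)
    (c : (Fin (k + 1) → α) → C) {S : Set α} (hS : S.Infinite) :
    ∃ a : ℕ → α, StrictMono a ∧ (∀ m, a m ∈ S) ∧ ∃ d : ℕ → C, ∀ m (t : Fin k → α),
      StrictMono t → (∀ l, t l ∈ a '' Ioi m) → c (Fin.cons (a m) t) = d m := by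
  have step : ∀ T : {T : Set α // T.Infinite}, ∃ a ∈ T.1, ∃ T' : {T' : Set α // T'.Infinite},
      T'.1 ⊆ T.1 ∩ Ioi a ∧ IsHomogeneous (fun t => c (Fin.cons a t)) T'.1 := by
    rintro ⟨T, hT⟩
    obtain ⟨a, ha, hTa⟩ := hT.exists_mem_infinite_inter_Ioi
    obtain ⟨T', hT'sub, hT'inf, hhom⟩ := ih (fun t => c (Fin.cons a t)) hTa
    exact ⟨a, ha, ⟨T', hT'inf⟩, hT'sub, hhom⟩
  choose a ha next hnext d hd using step
  let T : ℕ → {T : Set α // T.Infinite} := fun m => next^[m] ⟨S, hS⟩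
  have hT_succ : ∀ m, T (m + 1) = next (T m) := fun m => Function.iterate_succ_apply' _ _ _
  have hT_anti : Antitone fun m => (T m).1 := antitone_nat_of_succ_le fun m => by
    rw [hT_succ]
    exact (hnext _).trans inter_subset_left
  have ha_succ : ∀ m, a (T m) < a (T (m + 1)) := fun m =>
    (hnext (T m) (hT_succ m ▸ ha (T (m + 1)))).2
  refine ⟨fun m => a (T m), strictMono_nat_of_lt_succ ha_succ,
    fun m => hT_anti (Nat.zero_le m) (ha _), fun m => d (T m), fun m t ht htm => ?_⟩
  refine hd (T m) t ht fun l => ?_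
  obtain ⟨m', hm', hm't⟩ := htm l
  rw [← hm't, ← hT_succ]
  exact hT_anti (Nat.succ_le_of_lt hm') (ha _)

/-- The infinite Ramsey theorem. -/
theorem Set.Infinite.exists_infinite_isHomogeneous [Finite C] (k : ℕ) :
    ∀ (c : (Fin k → α) → C) {S : Set α}, S.Infinite → ∃ B ⊆ S, B.Infinite ∧ IsHomogeneous c B := by
  induction k with
  | zero =>
    exact fun c S hS => ⟨S, subset_rfl, hS, c Fin.elim0,
      fun w _ _ => congrArg c (Subsingleton.elim _ _)⟩
  | succ k ih =>
    intro c S hS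
    obtain ⟨a, ha, haS, d, hd⟩ := exists_strictMono_forall_cons_eq ih c hS
    obtain ⟨d₀, hd₀⟩ := Finite.exists_infinite_fiber d
    refine ⟨a '' (d ⁻¹' {d₀}), image_subset_iff.2 fun m _ => haS m,
      (infinite_coe_iff.1 hd₀).image ha.injective.injOn, d₀, fun w hw hwB => ?_⟩
    obtain ⟨m, hm, hm0⟩ := hwB 0
    have htail : ∀ l, Fin.tail w l ∈ a '' Ioi m := fun l => by
      obtain ⟨m', -, hm'⟩ := hwB l.succ
      refine ⟨m', ha.lt_iff_lt.1 ?_, hm'⟩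
      rw [hm', hm0]
      exact hw (Fin.succ_pos l)
    have htail_mono : StrictMono (Fin.tail w) := fun _ _ h => hw (Fin.succ_lt_succ_iff.2 h)
    rw [← Fin.cons_self_tail w, ← hm0, hd m (Fin.tail w) htail_mono htail]
    exact hm

end Ramsey

section ShiftIncreasing

variable {α β : Type*} [LinearOrder α]

def IsIncreasingTupleIn (B : Set α) (k : ℕ) (v : ℕ → α) : Prop :=
  (∀ j ≤ k, v j ∈ B) ∧ ∀ j < k, v j < v (j + 1)

namespace IsIncreasingTupleIn

variable {B B' : Set α} {k : ℕ} {v : ℕ → α}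

theorem mono (hv : IsIncreasingTupleIn B k v) (h : B ⊆ B') : IsIncreasingTupleIn B' k v :=
  ⟨fun j hj => h (hv.1 j hj), hv.2⟩

theorem init (hv : IsIncreasingTupleIn B (k + 1) v) : IsIncreasingTupleIn B k v :=
  ⟨fun j hj => hv.1 j (by omega), fun j hj => hv.2 j (by omega)⟩

theorem tail (hv : IsIncreasingTupleIn B (k + 1) v) :
    IsIncreasingTupleIn B k fun j => v (j + 1) :=
  ⟨fun j hj => hv.1 (j + 1) (by omega), fun j hj => hv.2 (j + 1) (by omega)⟩

theorem strictMono (hv : IsIncreasingTupleIn B k v) : StrictMono fun l : Fin (k + 1) => v l :=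
  Fin.strictMono_iff_lt_succ.2 fun l => hv.2 l l.isLt

theorem of_strictMono {g : ℕ → α} (hg : StrictMono g) (hgB : ∀ m, g m ∈ B) (m : ℕ) :
    IsIncreasingTupleIn B k fun j => g (m + j) :=
  ⟨fun j _ => hgB _, fun j _ => hg (by omega)⟩

end IsIncreasingTupleIn

def ShiftIncreasingOn [Preorder β] (F : (ℕ → α) → β) (k : ℕ) (B : Set α) : Prop :=
  ∀ v, IsIncreasingTupleIn B (k + 1) v → F v < F fun j => v (j + 1)

theorem ShiftIncreasingOn.mono [Preorder β] {F : (ℕ → α) → β} {k : ℕ} {B B' : Set α}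
    (hF : ShiftIncreasingOn F k B') (h : B ⊆ B') : ShiftIncreasingOn F k B :=
  fun v hv => hF v (hv.mono h)

variable [WellFoundedLT α] [LinearOrder β] [WellFoundedLT β]

theorem Set.Infinite.exists_infinite_shiftIncreasingOn {F : (ℕ → α) → β} {k : ℕ}
    (hF : ∀ v v' : ℕ → α, (∀ l ≤ k, v l = v' l) → F v = F v') {A : Set α} (hA : A.Infinite)
    (hne : ∀ v, IsIncreasingTupleIn A (k + 1) v → F v ≠ F fun j => v (j + 1)) :
    ∃ B ⊆ A, B.Infinite ∧ ShiftIncreasingOn F k B := by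
  let c : (Fin (k + 2) → α) → Prop := fun w =>
    ∃ v : ℕ → α, (∀ l : Fin (k + 2), v l = w l) ∧ F v < F fun j => v (j + 1)
  have hc : ∀ v : ℕ → α, c (fun l => v l) ↔ F v < F fun j => v (j + 1) := fun v =>
    ⟨fun ⟨v', hv', hlt⟩ => by
      rwa [hF v' v fun l hl => hv' ⟨l, by omega⟩,
        hF (fun j => v' (j + 1)) (fun j => v (j + 1)) fun l hl => hv' ⟨l + 1, by omega⟩] at hlt,
      fun hlt => ⟨v, fun _ => rfl, hlt⟩⟩
  obtain ⟨B, hBA, hB, d, hd⟩ := hA.exists_infinite_isHomogeneous (k + 2) c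
  have hcol : ∀ v, IsIncreasingTupleIn B (k + 1) v → ((F v < F fun j => v (j + 1)) ↔ d) :=
    fun v hv => (hc v).symm.trans (Iff.of_eq (hd _ hv.strictMono fun l => hv.1 l (by omega)))
  by_cases hdt : d
  · exact ⟨B, hBA, hB, fun v hv => (hcol v hv).2 hdt⟩
  · exfalso
    obtain ⟨g, hg, hgB⟩ := hB.exists_strictMono_mem
    refine not_strictAnti_of_wellFoundedLT (fun m => F fun j => g (m + j))
      (strictAnti_nat_of_succ_lt fun m => ?_)
    have hv := IsIncreasingTupleIn.of_strictMono (k := k + 1) hg hgB m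
    have hshift : (fun j => g (m + (j + 1))) = fun j => g (m + 1 + j) :=
      funext fun j => congrArg g (by omega)
    have hge := not_lt.1 (mt (hcol _ hv).1 hdt)
    rw [hshift] at hge
    exact lt_of_le_of_ne hge (hshift ▸ hne _ (hv.mono hBA)).symm

end ShiftIncreasing

section Rho

variable {n : ℕ} {ρ : ℕ → Ordinal → Ordinal → Ordinal}

theorem omegaOrd_pos (k : ℕ) : 0 < omegaOrd k :=
  Cardinal.ord_pos.2 (Cardinal.aleph_pos k)

theorem fseq_congr (i : ℕ) {v v' : ℕ → Ordinal} (h : ∀ l ≤ i, v l = v' l) :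
    fseq n ρ i v = fseq n ρ i v' := by
  induction i generalizing v v' with
  | zero => exact h 0 le_rfl
  | succ i ih =>
    simp only [fseq, ih fun l hl => h l (by omega), ih fun l hl => h (l + 1) (by omega)]

theorem fseq_succ_of_ne {i : ℕ} {v : ℕ → Ordinal}
    (h : fseq n ρ i v ≠ fseq n ρ i fun j => v (j + 1)) :
    fseq n ρ (i + 1) v = ρ (n - i) (fseq n ρ i v) (fseq n ρ i fun j => v (j + 1)) :=
  if_neg h

theorem fseq_lt_omegaOrd (hρ : IsRhoSystem n ρ) {i : ℕ} (hi : i ≤ n) {v : ℕ → Ordinal}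
    (hv : ∀ l ≤ i, v l < omegaOrd n) : fseq n ρ i v < omegaOrd (n - i) := by
  induction i generalizing v with
  | zero => exact hv 0 le_rfl
  | succ i ih =>
    have hx := ih (by omega) fun l hl => hv l (by omega)
    have hy := ih (by omega) (v := fun j => v (j + 1)) fun l hl => hv (l + 1) (by omega)
    by_cases he : fseq n ρ i v = fseq n ρ i fun j => v (j + 1)
    · rw [fseq, if_pos he]
      exact omegaOrd_pos _
    · rw [fseq_succ_of_ne he, show n - (i + 1) = n - i - 1 by omega]
      exact (hρ (n - i) (by omega) (by omega)).2.1 _ _ hx hy he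

/-- Property (c) of `ρ^{(n-i)}`, applied to the increasing triple
`f_i(α_0,…,α_i) < f_i(α_1,…,α_{i+1}) < f_i(α_2,…,α_{i+2})`. -/
theorem fseq_succ_ne_of_shiftIncreasingOn (hρ : IsRhoSystem n ρ) {i : ℕ} (hi : i + 1 ≤ n)
    {B : Set Ordinal} (hB : B ⊆ Iio (omegaOrd n)) (hf : ShiftIncreasingOn (fseq n ρ i) i B)
    {v : ℕ → Ordinal} (hv : IsIncreasingTupleIn B (i + 2) v) :
    fseq n ρ (i + 1) v ≠ fseq n ρ (i + 1) fun j => v (j + 1) := by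
  have hxy := hf v hv.init
  have hyz := hf _ hv.tail
  have hz : (fseq n ρ i fun j => v (j + 1 + 1)) < omegaOrd (n - i) :=
    fseq_lt_omegaOrd hρ (by omega) fun l hl => hB (hv.1 (l + 1 + 1) (by omega))
  rw [fseq_succ_of_ne hxy.ne, fseq_succ_of_ne hyz.ne]
  exact (hρ (n - i) (by omega) (by omega)).2.2.2.2 _ _ _ hxy hyz hz

theorem exists_infinite_forall_le_shiftIncreasingOn_fseq (hρ : IsRhoSystem n ρ) {A : Set Ordinal}
    (hA : A ⊆ Iio (omegaOrd n)) (hAinf : A.Infinite) {i : ℕ} (hi : i ≤ n) :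
    ∃ B ⊆ A, B.Infinite ∧ ∀ j ≤ i, ShiftIncreasingOn (fseq n ρ j) j B := by
  induction i with
  | zero =>
    refine ⟨A, subset_rfl, hAinf, fun j hj v hv => ?_⟩
    obtain rfl := Nat.le_zero.1 hj
    exact hv.2 0 Nat.zero_lt_one
  | succ i ih =>
    obtain ⟨B, hBA, hB, hBf⟩ := ih (by omega)
    obtain ⟨B', hB'B, hB', hB'f⟩ := hB.exists_infinite_shiftIncreasingOn
      (fun _ _ => fseq_congr (i + 1))
      fun v hv => fseq_succ_ne_of_shiftIncreasingOn hρ hi (hBA.trans hA) (hBf i le_rfl) hv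
    refine ⟨B', hB'B.trans hBA, hB', fun j hj => ?_⟩
    rcases Nat.lt_or_eq_of_le hj with hj | rfl
    · exact (hBf j (Nat.lt_succ_iff.1 hj)).mono hB'B
    · exact hB'f

end Rho

theorem stmt5_general (n : ℕ) (ρ : ℕ → Ordinal → Ordinal → Ordinal)
    (hρ : IsRhoSystem n ρ)
    (A : Set Ordinal) (hA : A ⊆ Set.Iio (omegaOrd n)) (hAinf : A.Infinite) :
    ∃ B ⊆ A, B.Infinite ∧
      ∀ i ≤ n, ∀ v : ℕ → Ordinal,
        (∀ j, j ≤ i + 1 → v j ∈ B) → (∀ j, j < i + 1 → v j < v (j + 1)) →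
        fseq n ρ i v < fseq n ρ i (fun j => v (j + 1)) := by
  obtain ⟨B, hBA, hB, hBf⟩ := exists_infinite_forall_le_shiftIncreasingOn_fseq hρ hA hAinf le_rfl
  exact ⟨B, hBA, hB, fun i hi v hvB hv => hBf i hi v ⟨hvB, hv⟩⟩

/-- For every infinite `A ⊆ ω_n` there is an infinite `B ⊆ A` on which every `f_i`
(`i ≤ n`) is shift-increasing: `f_i(α_0,…,α_i) < f_i(α_1,…,α_i,β)` whenever
`α_0 < α_1 < … < α_i < β` all lie in `B`. -/
theorem stmt5 (n : ℕ) (hn : 1 ≤ n) (ρ : ℕ → Ordinal → Ordinal → Ordinal)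
    (hρ : IsRhoSystem n ρ)
    (A : Set Ordinal) (hA : A ⊆ Set.Iio (omegaOrd n)) (hAinf : A.Infinite) :
    ∃ B ⊆ A, B.Infinite ∧
      ∀ i ≤ n, ∀ v : ℕ → Ordinal,
        (∀ j, j ≤ i + 1 → v j ∈ B) → (∀ j, j < i + 1 → v j < v (j + 1)) →
        fseq n ρ i v < fseq n ρ i (fun j => v (j + 1)) :=
  stmt5_general n ρ hρ A hA hAinf
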